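/- Let τ be a chord diagram of order n ≥ 1 and let τ' be the chord diagram of order n − 1 obtained from τ by deleting one chord (restricting τ to the remaining 2(n−1) endpoints and renumbering by the cyclic-order-preserving bijection onto ZMod (2(n−1))). Then F(τ') = F(τ) + 1 or F(τ') = F(τ) − 1; consequently (n − 1) + 1 − F(τ') ≤ n + 1 − F(τ). -/

import Mathlib

/-- Strict cyclic betweenness on the cyclic group with `m` elements (`ZMod m`, realized as
`Fin m` so that the group is empty when `m = 0`): `b` lies on the open cyclic arc
from `a` to `c`. -/
def cyclicSbtw {m : ℕ} (a b c : Fin m) : Prop :=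
  0 < (b.val + (m - a.val)) % m ∧ (b.val + (m - a.val)) % m < (c.val + (m - a.val)) % m

/-- A chord diagram of order `n`: a fixed-point-free involution `τ` of the cyclic group
with `2n` elements (`ZMod (2n)`, realized as `Fin (2n)`); its chords are the pairs
`{i, τ i}`. -/
structure ChordDiagram (n : ℕ) where
  τ : Equiv.Perm (Fin (2 * n))
  invol : ∀ i, τ (τ i) = i
  fpf : ∀ i, τ i ≠ i

namespace ChordDiagram

/-- The boundary permutation `φ(i) = τ(i) + 1`. -/
def boundary {n : ℕ} (D : ChordDiagram n) : Equiv.Perm (Fin (2 * n)) :=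
  D.τ.trans (finRotate (2 * n))

/-- The number `F` of boundary components: the number of orbits of the boundary
permutation, with the convention `F = 1` when `n = 0`. -/
noncomputable def F {n : ℕ} (D : ChordDiagram n) : ℕ :=
  if n = 0 then 1
  else Nat.card (Quotient (MulAction.orbitRel (Subgroup.zpowers D.boundary) (Fin (2 * n))))

/-- Build a chord diagram from an involutive, fixed-point-free function. -/
def ofInvol {n : ℕ} (f : Fin (2 * n) → Fin (2 * n)) (h : Function.Involutive f)
    (hf : ∀ i, f i ≠ i) : ChordDiagram n :=
  ⟨Function.Involutive.toPerm f h, h, hf⟩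

/-- The empty chord diagram (order 0). -/
def emptyDiagram : ChordDiagram 0 := ⟨1, fun i => i.elim0, fun i => i.elim0⟩

/-- The chord diagram `(abab)`: chords `{0,2}, {1,3}` on `ZMod 4`. -/
def abab : ChordDiagram 2 := ofInvol ![2, 3, 0, 1] (by intro x; fin_cases x <;> rfl) (by decide)

/-- The chord diagram `(abcabc)`: chords `{0,3}, {1,4}, {2,5}` on `ZMod 6`. -/
def abcabc : ChordDiagram 3 :=
  ofInvol ![3, 4, 5, 0, 1, 2] (by intro x; fin_cases x <;> rfl) (by decide)

/-- The forbidden diagram `(ababcdcd)`: chords `{0,2},{1,3},{4,6},{5,7}` on `ZMod 8`. -/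
def ababcdcd : ChordDiagram 4 :=
  ofInvol ![2, 3, 0, 1, 6, 7, 4, 5] (by intro x; fin_cases x <;> rfl) (by decide)

/-- The forbidden diagram `(abcdabcd)`: chords `{0,4},{1,5},{2,6},{3,7}` on `ZMod 8`. -/
def abcdabcd : ChordDiagram 4 :=
  ofInvol ![4, 5, 6, 7, 0, 1, 2, 3] (by intro x; fin_cases x <;> rfl) (by decide)

/-- The forbidden diagram `(abacdcbd)`: chords `{0,2},{1,6},{3,5},{4,7}` on `ZMod 8`. -/
def abacdcbd : ChordDiagram 4 :=
  ofInvol ![2, 6, 0, 5, 7, 3, 1, 4] (by intro x; fin_cases x <;> rfl) (by decide)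

/-- The forbidden diagram `(abcadbdc)`: chords `{0,3},{1,5},{2,7},{4,6}` on `ZMod 8`. -/
def abcadbdc : ChordDiagram 4 :=
  ofInvol ![3, 5, 7, 0, 6, 1, 4, 2] (by intro x; fin_cases x <;> rfl) (by decide)

/-- The chords `{i, τ i}` and `{j, τ j}` interlace: exactly one of `j, τ j` lies on
the open cyclic arc from `i` to `τ i`. -/
def Interlaces {n : ℕ} (D : ChordDiagram n) (i j : Fin (2 * n)) : Prop :=
  Xor' (cyclicSbtw i j (D.τ i)) (cyclicSbtw i (D.τ j) (D.τ i))

/-- The type of chords of a chord diagram. -/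
def Chord {n : ℕ} (D : ChordDiagram n) : Type :=
  {p : Sym2 (Fin (2 * n)) // ∃ i, p = s(i, D.τ i)}

/-- The interlacement graph (graph of loops) of a chord diagram: vertices are the chords,
edges are the interlacing pairs of distinct chords. -/
def interGraph {n : ℕ} (D : ChordDiagram n) : SimpleGraph D.Chord where
  Adj c d := c ≠ d ∧
    ((∃ i j, c.1 = s(i, D.τ i) ∧ d.1 = s(j, D.τ j) ∧ D.Interlaces i j) ∨
     (∃ i j, d.1 = s(i, D.τ i) ∧ c.1 = s(j, D.τ j) ∧ D.Interlaces i j))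
  symm := by
    constructor
    intro c d h
    exact ⟨h.1.symm, h.2.symm⟩
  loopless := by
    constructor
    intro c h
    exact h.1 rfl

/-- A cyclic-order-preserving injection between cyclic groups. -/
def CycEmb {k m : ℕ} (f : Fin k → Fin m) : Prop :=
  Function.Injective f ∧ ∀ a b c, cyclicSbtw a b c → cyclicSbtw (f a) (f b) (f c)

/-- `D` contains the diagram `P`: the sub-diagram of `D` induced by some set of its chords
equals `P` up to rotation, i.e. there is a cyclic-order-preserving injection
`f : ZMod (2k) → ZMod (2n)` intertwining the involutions. -/
def Contains {n k : ℕ} (D : ChordDiagram n) (P : ChordDiagram k) : Prop :=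
  ∃ f : Fin (2 * k) → Fin (2 * n), CycEmb f ∧ ∀ i, D.τ (f i) = f (P.τ i)

/-- `D'` is obtained from `D` by deleting the chord `{j, τ j}` and renumbering the
remaining `2n` endpoints by the cyclic-order-preserving bijection onto `ZMod (2n)`. -/
def DeleteChord {n : ℕ} (D : ChordDiagram (n + 1)) (j : Fin (2 * (n + 1)))
    (D' : ChordDiagram n) : Prop :=
  ∃ f : Fin (2 * n) → Fin (2 * (n + 1)), CycEmb f ∧
    Set.range f = ({j, D.τ j} : Set (Fin (2 * (n + 1))))ᶜ ∧
    ∀ i, D.τ (f i) = f (D'.τ i)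

/-- Reduction operation (α): deletion of an isolated chord `{i, i+1}` (where `τ i = i + 1`). -/
def StepAlpha {n : ℕ} (D : ChordDiagram (n + 1)) (D' : ChordDiagram n) : Prop :=
  ∃ i, D.τ i = finRotate (2 * (n + 1)) i ∧ DeleteChord D i D'

/-- Reduction operation (β): deletion of the chord `{i+1, τ(i+1)}` from a parallel pair,
i.e. `τ(i+1) = τ(i) - 1` with the chords `{i, τ i}` and `{i+1, τ(i+1)}` distinct. -/
def StepBeta {n : ℕ} (D : ChordDiagram (n + 1)) (D' : ChordDiagram n) : Prop :=
  ∃ i, D.τ (finRotate (2 * (n + 1)) i) = (finRotate (2 * (n + 1))).symm (D.τ i) ∧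
    D.τ i ≠ finRotate (2 * (n + 1)) i ∧
    DeleteChord D (finRotate (2 * (n + 1)) i) D'

/-- One reduction step (operation (α) or (β)) between chord diagrams. -/
def Step (p q : Σ n, ChordDiagram n) : Prop :=
  ∃ h : p.1 = q.1 + 1,
    StepAlpha (cast (congrArg ChordDiagram h) p.2) q.2 ∨
    StepBeta (cast (congrArg ChordDiagram h) p.2) q.2

/-- `p` reduces to `q` by finitely many operations (α), (β) (possibly none). -/
def Reduces (p q : Σ n, ChordDiagram n) : Prop := Relation.ReflTransGen Step p q

/-- `D` reduces to one of the diagrams `()`, `(abab)`, `(abcabc)`. -/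
def ReducesToBasic {n : ℕ} (D : ChordDiagram n) : Prop :=
  Reduces ⟨n, D⟩ ⟨0, emptyDiagram⟩ ∨ Reduces ⟨n, D⟩ ⟨2, abab⟩ ∨ Reduces ⟨n, D⟩ ⟨3, abcabc⟩

end ChordDiagram

/-- A simple graph is a disjoint union of a (possibly empty) set of isolated vertices and a
complete bipartite or complete tripartite graph: there are three pairwise disjoint sets
`A`, `B`, `C` of vertices (a part may be empty; `C = ∅` gives the complete bipartite case)
such that two vertices are adjacent iff they lie in two different ones of these parts;
all remaining vertices are isolated. -/
def IsIsolatedPlusCompleteMultipartite {V : Type*} (G : SimpleGraph V) : Prop :=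
  ∃ A B C : Set V, Disjoint A B ∧ Disjoint A C ∧ Disjoint B C ∧
    ∀ v w, G.Adj v w ↔
      ((v ∈ A ∧ w ∈ B) ∨ (v ∈ B ∧ w ∈ A) ∨ (v ∈ A ∧ w ∈ C) ∨ (v ∈ C ∧ w ∈ A) ∨
       (v ∈ B ∧ w ∈ C) ∨ (v ∈ C ∧ w ∈ B))

/-!
Deleting the chord `{j, τ j}` amounts to multiplying the boundary permutation `φ` by the
transposition `(j τj)`: the product `ψ = φ * swap j (τ j)` sends each endpoint of the deleted
chord to its successor, so its first-return map to the surviving endpoints is, after the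
renumbering, the boundary permutation of `D'`. Hence `F(D')` is the number of orbits of `ψ`,
and multiplying a permutation by a transposition either merges two of its cycles or splits
one of them.
-/

open Equiv Equiv.Perm

namespace Equiv.Perm

variable {α : Type*}

noncomputable def numOrbits (σ : Perm α) : ℕ := Nat.card (Quotient (SameCycle.setoid σ))

theorem orbitRel_zpowers_eq_sameCycle_setoid (σ : Perm α) :
    MulAction.orbitRel (Subgroup.zpowers σ) α = SameCycle.setoid σ := by
  ext x y
  rw [MulAction.orbitRel_apply, MulAction.mem_orbit_iff, Subgroup.exists_zpowers]
  exact ⟨fun ⟨i, hi⟩ => SameCycle.symm ⟨i, hi⟩, fun h => h.symm⟩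

theorem numOrbits_one : numOrbits (1 : Perm α) = Nat.card α :=
  (Nat.card_eq_of_bijective _ ⟨fun _ _ h => sameCycle_one.mp (Quotient.exact h),
    Quotient.mk_surjective⟩).symm

variable {σ : Perm α}

theorem pow_apply_eq_pow_apply_of_forall_lt {τ : Perm α} {x : α} {d : ℕ}
    (h : ∀ l < d, σ ((τ ^ l) x) = τ ((τ ^ l) x)) : (σ ^ d) x = (τ ^ d) x := by
  induction d with
  | zero => rfl
  | succ d ih =>
    rw [pow_succ', mul_apply, ih fun l hl => h l (by omega), h d d.lt_succ_self, ← mul_apply,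
      ← pow_succ']

@[simp]
theorem mk_apply_sameCycle_setoid (x : α) :
    (⟦σ x⟧ : Quotient (SameCycle.setoid σ)) = ⟦x⟧ :=
  Quotient.sound (sameCycle_apply_left.mpr SameCycle.rfl)

variable [Finite α]

theorem SameCycle.apply_eq_of_forall {β : Type*} {g : α → β} (hg : ∀ x, g (σ x) = g x)
    {x y : α} (h : σ.SameCycle x y) : g x = g y := by
  obtain ⟨k, rfl⟩ := h.exists_nat_pow_eq
  clear h
  induction k with
  | zero => rfl
  | succ k ih => rw [ih, pow_succ', mul_apply, hg]

theorem numOrbits_eq_of_firstReturn {β : Type*} {ρ : Perm β} {f : β → α}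
    (hf : Function.Injective f)
    (hret : ∀ b, ∃ d, 0 < d ∧ (σ ^ d) (f b) = f (ρ b) ∧
      ∀ l, 0 < l → l < d → (σ ^ l) (f b) ∉ Set.range f)
    (hmeets : ∀ x, ∃ k b, (σ ^ k) x = f b) :
    numOrbits ρ = numOrbits σ := by
  have : Finite β := Finite.of_injective f hf
  have hfwd : ∀ b b', ρ.SameCycle b b' → σ.SameCycle (f b) (f b') := fun b b' h =>
    Quotient.exact <| h.apply_eq_of_forall
      (g := fun b => (⟦f b⟧ : Quotient (SameCycle.setoid σ))) fun b => Quotient.sound <| by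
        obtain ⟨d, -, hd, -⟩ := hret b
        exact hd ▸ (sameCycle_pow_right.mpr SameCycle.rfl).symm
  have hback : ∀ k b b', (σ ^ k) (f b) = f b' → ρ.SameCycle b b' := by
    intro k
    induction k using Nat.strong_induction_on with
    | _ k ih =>
      intro b b' hk
      obtain ⟨d, hd0, hd, hgap⟩ := hret b
      rcases Nat.eq_zero_or_pos k with rfl | hk0
      · exact hf hk ▸ SameCycle.rfl
      rcases lt_or_ge k d with hkd | hdk
      · exact absurd ⟨b', hk.symm⟩ (hgap k hk0 hkd)
      · have : (σ ^ (k - d)) (f (ρ b)) = f b' := by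
          rw [← hd, ← mul_apply, ← pow_add, Nat.sub_add_cancel hdk, hk]
        exact (sameCycle_apply_right.mpr SameCycle.rfl).trans (ih (k - d) (by omega) _ _ this)
  refine Nat.card_eq_of_bijective (Quotient.map f hfwd) ⟨fun p q => ?_, fun q => ?_⟩
  · induction p, q using Quotient.inductionOn₂ with | h b b' => ?_
    intro h
    obtain ⟨k, hk⟩ := (Quotient.exact h : σ.SameCycle (f b) (f b')).exists_nat_pow_eq
    exact Quotient.sound (hback k b b' hk)
  · induction q using Quotient.inductionOn with | h x => ?_
    obtain ⟨k, b, hk⟩ := hmeets x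
    have : σ.SameCycle x (f b) := hk ▸ sameCycle_pow_right.mpr SameCycle.rfl
    exact ⟨⟦b⟧, Quotient.sound this.symm⟩

variable [DecidableEq α] {a b : α}

theorem sameCycle_mul_swap_of_not_sameCycle (h : ¬σ.SameCycle a b) :
    (σ * swap a b).SameCycle a b := by
  -- backwards from `b`, the `σ`-cycle of `b` avoids `a`, so `σ * swap a b` retraces it
  have back : ∀ k : ℕ, (σ * swap a b).SameCycle ((σ⁻¹ ^ k) b) b := by
    intro k
    induction k with
    | zero => exact SameCycle.rfl
    | succ k ih =>
      set y := (σ⁻¹ ^ k) b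
      rw [pow_succ', mul_apply]
      by_cases hyb : σ⁻¹ y = b
      · rw [hyb]
      have hy : σ.SameCycle b (σ⁻¹ y) :=
        sameCycle_inv.mp (sameCycle_apply_right.mpr (sameCycle_pow_right.mpr SameCycle.rfl))
      have hya : σ⁻¹ y ≠ a := fun hya => h (hya ▸ hy.symm)
      have hstep : (σ * swap a b) (σ⁻¹ y) = y := by
        rw [mul_apply, swap_apply_of_ne_of_ne hya hyb]
        exact σ.apply_symm_apply y
      rw [← hstep] at ih
      exact sameCycle_apply_left.mp ih
  obtain ⟨k, hk⟩ :=
    (sameCycle_inv.mpr (sameCycle_apply_right.mpr (SameCycle.refl σ b))).exists_nat_pow_eq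
  have : (σ * swap a b) a = σ b := by rw [mul_apply, swap_apply_left]
  exact sameCycle_apply_left.mp (this ▸ hk ▸ back k)

theorem SameCycle.mul_swap {x y : α} (h : σ.SameCycle x y)
    (hab : (σ * swap a b).SameCycle a b) : (σ * swap a b).SameCycle x y := by
  refine Quotient.exact (h.apply_eq_of_forall (g := fun z => (⟦z⟧ : Quotient
    (SameCycle.setoid (σ * swap a b)))) fun z => Quotient.sound ?_)
  show (σ * swap a b).SameCycle (σ z) z
  by_cases hza : z = a
  · have : σ z = (σ * swap a b) b := by rw [mul_apply, swap_apply_right, hza]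
    rw [this, sameCycle_apply_left, hza]
    exact hab.symm
  by_cases hzb : z = b
  · have : σ z = (σ * swap a b) a := by rw [mul_apply, swap_apply_left, hzb]
    rw [this, sameCycle_apply_left, hzb]
    exact hab
  · have : σ z = (σ * swap a b) z := by rw [mul_apply, swap_apply_of_ne_of_ne hza hzb]
    rw [this, sameCycle_apply_left]

theorem numOrbits_eq_numOrbits_mul_swap_add_one (h : ¬σ.SameCycle a b) :
    numOrbits σ = numOrbits (σ * swap a b) + 1 := by
  classical
  have hab := sameCycle_mul_swap_of_not_sameCycle h
  -- `G` collapses the `σ`-cycle of `b` onto that of `a`;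
  -- its fibres are the cycles of `σ * swap a b`
  let G : α → Quotient (SameCycle.setoid σ) := fun x => ⟦if σ.SameCycle x b then a else x⟧
  have hG : ∀ z, G ((σ * swap a b) z) = G z := by
    intro z
    by_cases hza : z = a
    · subst hza
      simp [G, swap_apply_left, sameCycle_apply_left.mpr SameCycle.rfl]
    by_cases hzb : z = b
    · subst hzb
      simp [G, swap_apply_right, sameCycle_apply_left, h, SameCycle.rfl]
    · simp only [G, mul_apply, swap_apply_of_ne_of_ne hza hzb, sameCycle_apply_left]
      split_ifs <;> simp
  have hker : SameCycle.setoid (σ * swap a b) = Setoid.ker G := by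
    ext x y
    refine ⟨fun hxy => hxy.apply_eq_of_forall hG, fun hxy => ?_⟩
    have hmerge : ∀ z, (σ * swap a b).SameCycle z (if σ.SameCycle z b then a else z) := by
      intro z
      split_ifs with hz
      · exact (hz.mul_swap hab).trans hab.symm
      · exact SameCycle.rfl
    exact (hmerge x).trans (((Quotient.exact hxy).mul_swap hab).trans (hmerge y).symm)
  have hrange : Set.range G = {⟦b⟧}ᶜ := by
    ext q
    induction q using Quotient.inductionOn with | h x => ?_
    refine ⟨?_, fun hx => ⟨x, ?_⟩⟩
    · rintro ⟨y, hy⟩ hxb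
      have : σ.SameCycle (if σ.SameCycle y b then a else y) b := Quotient.exact (hy.trans hxb)
      split_ifs at this with hyb
      exacts [h this, hyb this]
    · have hxb : ¬σ.SameCycle x b := fun hxb => hx (Quotient.sound hxb)
      simp only [G, if_neg hxb]
  unfold numOrbits
  rw [hker, Nat.card_congr (Setoid.quotientKerEquivRange G), hrange,
    Nat.card_coe_set_eq, Set.ncard_compl, Set.ncard_singleton]
  have : Nonempty (Quotient (SameCycle.setoid σ)) := ⟨⟦a⟧⟩
  have : 0 < Nat.card (Quotient (SameCycle.setoid σ)) := Nat.card_pos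
  omega

theorem not_sameCycle_mul_swap (hab : a ≠ b) (h : σ.SameCycle a b) :
    ¬(σ * swap a b).SameCycle a b := by
  classical
  have hex : ∃ k, 0 < k ∧ (σ ^ k) a = b :=
    let ⟨k, hk0, _, hk⟩ := h.exists_pow_eq''
    ⟨k, hk0, hk⟩
  obtain ⟨k, ⟨hk0, hk⟩, hmin⟩ :
      ∃ k, (0 < k ∧ (σ ^ k) a = b) ∧ ∀ i < k, ¬(0 < i ∧ (σ ^ i) a = b) :=
    ⟨Nat.find hex, Nat.find_spec hex, fun _ => Nat.find_min hex⟩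
  -- the cycle of `b` under `σ * swap a b` is `b ↦ σ a ↦ σ² a ↦ ⋯ ↦ σᵏ a = b`
  let T : Set α := {x | ∃ i, 0 < i ∧ i ≤ k ∧ (σ ^ i) a = x}
  have haT : a ∉ T := by
    rintro ⟨i, hi0, hik, hi⟩
    have : (σ ^ (k - i)) a = b := by
      rw [← hk, ← Nat.sub_add_cancel hik, pow_add, mul_apply, hi, Nat.sub_add_cancel hik]
    rcases Nat.eq_zero_or_pos (k - i) with hki | hki
    · exact hab (by rwa [hki, pow_zero, one_apply] at this)
    · exact hmin (k - i) (by omega) ⟨hki, this⟩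
  have hT : ∀ x ∈ T, (σ * swap a b) x ∈ T := by
    rintro x ⟨i, hi0, hik, rfl⟩
    obtain rfl | hik := hik.eq_or_lt
    · refine ⟨1, one_pos, hk0, ?_⟩
      rw [hk, mul_apply, swap_apply_right, pow_one]
    · have hia : (σ ^ i) a ≠ a := fun e => haT ⟨i, hi0, hik.le, e⟩
      have hib : (σ ^ i) a ≠ b := fun e => hmin i hik ⟨hi0, e⟩
      refine ⟨i + 1, i.succ_pos, hik, ?_⟩
      rw [mul_apply, swap_apply_of_ne_of_ne hia hib, pow_succ', mul_apply]
  have hpow : ∀ l : ℕ, ((σ * swap a b) ^ l) b ∈ T := by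
    intro l
    induction l with
    | zero => exact ⟨k, hk0, le_rfl, hk⟩
    | succ l ih => rw [pow_succ', mul_apply]; exact hT _ ih
  intro hσ
  obtain ⟨l, hl⟩ := hσ.symm.exists_nat_pow_eq
  exact haT (hl ▸ hpow l)

theorem numOrbits_mul_swap (hab : a ≠ b) :
    numOrbits (σ * swap a b) = numOrbits σ + 1 ∨
      numOrbits (σ * swap a b) + 1 = numOrbits σ := by
  by_cases h : σ.SameCycle a b
  · left
    have := numOrbits_eq_numOrbits_mul_swap_add_one (not_sameCycle_mul_swap hab h)
    rwa [mul_assoc, swap_mul_self, mul_one] at this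
  · exact Or.inr (numOrbits_eq_numOrbits_mul_swap_add_one h).symm

end Equiv.Perm

section CyclicOrder

open Fin.NatCast

theorem Fin.add_one_ne_self {m : ℕ} [NeZero m] (hm : 1 < m) (x : Fin m) : x + 1 ≠ x :=
  add_ne_left.mpr fun h => by simp [Fin.ext_iff, Nat.mod_eq_of_lt hm] at h

theorem finRotate_pow_apply {m : ℕ} [NeZero m] (l : ℕ) (x : Fin m) :
    (finRotate m ^ l) x = x + (l : Fin m) := by
  induction l with
  | zero => simp
  | succ l ih => rw [pow_succ', Perm.mul_apply, ih, finRotate_apply, Nat.cast_succ, add_assoc]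

theorem cyclicSbtw_iff {m : ℕ} {a b c : Fin m} :
    cyclicSbtw a b c ↔ 0 < (b - a).val ∧ (b - a).val < (c - a).val := by
  simp only [cyclicSbtw, Fin.val_sub, Nat.add_comm]

theorem cyclicSbtw_add_one {m : ℕ} [NeZero m] {a b : Fin m} (hba : b ≠ a) (hb : b ≠ a + 1) :
    cyclicSbtw a (a + 1) b := by
  have hm : 1 < m := by
    by_contra! hm
    have : Subsingleton (Fin m) := Fin.subsingleton_iff_le_one.mpr hm
    exact hba (Subsingleton.elim _ _)
  have h1 : (1 : Fin m).val = 1 := by rw [Fin.val_one', Nat.mod_eq_of_lt hm]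
  have h0 : (b - a).val ≠ 0 := fun h => hba (sub_eq_zero.mp (Fin.ext h))
  have h1' : (b - a).val ≠ 1 := fun h => hb <| by
    rw [← h1, ← Fin.ext_iff] at h
    rw [← h, add_sub_cancel]
  rw [cyclicSbtw_iff, add_sub_cancel_left, h1]
  omega

theorem exists_pow_apply_mem_of_apply_eq_add_one {m : ℕ} [NeZero m] {ψ : Perm (Fin m)}
    {s : Set (Fin m)} (hs : s.Nonempty) (hψ : ∀ p ∉ s, ψ p = p + 1) (y : Fin m) :
    ∃ l, (ψ ^ l) y ∈ s := by
  by_contra! hy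
  have hrot : ∀ l, (finRotate m ^ l) y = (ψ ^ l) y := fun l =>
    pow_apply_eq_pow_apply_of_forall_lt fun e _ => by rw [finRotate_apply, hψ _ (hy e)]
  obtain ⟨p, hp⟩ := hs
  apply hy (p - y).val
  rwa [← hrot, finRotate_pow_apply, Fin.cast_val_eq_self, add_sub_cancel]

namespace ChordDiagram.CycEmb

variable {k m : ℕ} {f : Fin k → Fin m}

theorem not_cyclicSbtw_add_one [NeZero k] (hf : CycEmb f) (x w : Fin k) :
    ¬cyclicSbtw (f x) (f w) (f (x + 1)) := by
  have := (f x).neZero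
  intro hw
  by_cases hwx : w = x
  · simp [hwx, cyclicSbtw_iff] at hw
  by_cases hwx1 : w = x + 1
  · exact lt_irrefl _ (hwx1 ▸ cyclicSbtw_iff.mp hw).2
  have := cyclicSbtw_iff.mp (hf.2 _ _ _ (cyclicSbtw_add_one hwx hwx1))
  have := cyclicSbtw_iff.mp hw
  omega

theorem add_notMem_range [NeZero k] [NeZero m] (hf : CycEmb f) (x : Fin k) {l : ℕ} (hl0 : 0 < l)
    (hl : l < (f (x + 1) - f x).val) : f x + (l : Fin m) ∉ Set.range f := by
  rintro ⟨w, hw⟩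
  apply hf.not_cyclicSbtw_add_one x w
  rw [cyclicSbtw_iff, hw, add_sub_cancel_left, Fin.val_natCast,
    Nat.mod_eq_of_lt (hl.trans (Fin.is_lt _))]
  exact ⟨hl0, hl⟩

theorem pow_apply_add_one [NeZero k] [NeZero m] (hf : CycEmb f) {ψ : Perm (Fin m)}
    (hψ : ∀ p ∉ Set.range f, ψ p = p + 1) (x : Fin k) {l : ℕ}
    (hl : l < (f (x + 1) - f x).val) : (ψ ^ l) (f x + 1) = f x + ((l + 1 : ℕ) : Fin m) := by
  have hrot : (ψ ^ l) (f x + 1) = (finRotate m ^ l) (f x + 1) := by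
    refine pow_apply_eq_pow_apply_of_forall_lt fun e he => ?_
    have he' : f x + 1 + (e : Fin m) ∉ Set.range f := by
      rw [add_assoc, ← Nat.cast_one, ← Nat.cast_add, add_comm 1 e]
      exact hf.add_notMem_range x e.succ_pos (by omega)
    rw [finRotate_pow_apply, finRotate_apply, hψ _ he']
  rw [hrot, finRotate_pow_apply, Nat.cast_succ, add_assoc, add_comm (1 : Fin m)]

end ChordDiagram.CycEmb

end CyclicOrder

namespace ChordDiagram

open Fin.NatCast

variable {n : ℕ}

theorem F_eq_numOrbits (D : ChordDiagram n) (hn : n ≠ 0) : D.F = numOrbits D.boundary := by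
  rw [F, if_neg hn, numOrbits, orbitRel_zpowers_eq_sameCycle_setoid]

theorem F_zero (D : ChordDiagram 0) : D.F = 1 := if_pos rfl

theorem boundary_apply [NeZero n] (D : ChordDiagram n) (x : Fin (2 * n)) :
    D.boundary x = D.τ x + 1 :=
  finRotate_apply _

theorem boundary_eq_one (D : ChordDiagram 1) : D.boundary = 1 := by
  ext x : 1
  rw [boundary_apply, Perm.one_apply]
  have := D.fpf x
  generalize D.τ x = y at this ⊢
  fin_cases x <;> fin_cases y <;> simp_all

theorem DeleteChord.numOrbits_boundary {D : ChordDiagram (n + 1)} {j : Fin (2 * (n + 1))}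
    {D' : ChordDiagram n} (hn : 0 < n) (h : D.DeleteChord j D') :
    numOrbits D'.boundary = numOrbits (D.boundary * swap j (D.τ j)) := by
  obtain ⟨f, hf, hrange, hτ⟩ := h
  have : NeZero n := ⟨hn.ne'⟩
  set ψ := D.boundary * swap j (D.τ j)
  have hψ : ∀ p ∉ Set.range f, ψ p = p + 1 := by
    intro p hp
    rw [hrange, Set.notMem_compl_iff, Set.mem_insert_iff, Set.mem_singleton_iff] at hp
    rw [Perm.mul_apply, boundary_apply]
    rcases hp with rfl | rfl
    · rw [swap_apply_left, D.invol]
    · rw [swap_apply_right]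
  refine numOrbits_eq_of_firstReturn hf.1 (fun b => ?_) fun y => ?_
  · set u := D'.τ b
    set g := (f (u + 1) - f u).val
    have hg : 0 < g := Nat.pos_of_ne_zero fun hg =>
      Fin.add_one_ne_self (by omega) u (hf.1 (sub_eq_zero.mp (Fin.ext hg)))
    have hfb : f b ∈ ({j, D.τ j} : Set _)ᶜ := hrange ▸ Set.mem_range_self b
    rw [Set.mem_compl_iff, Set.mem_insert_iff, Set.mem_singleton_iff, not_or] at hfb
    have hpow : ∀ l < g, (ψ ^ (l + 1)) (f b) = f u + ((l + 1 : ℕ) : Fin (2 * (n + 1))) := by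
      intro l hl
      rw [pow_succ, Perm.mul_apply, Perm.mul_apply, swap_apply_of_ne_of_ne hfb.1 hfb.2,
        boundary_apply, hτ]
      exact hf.pow_apply_add_one hψ u hl
    refine ⟨g, hg, ?_, fun l hl0 hl => ?_⟩
    · obtain ⟨e, he⟩ : ∃ e, g = e + 1 := ⟨g - 1, by omega⟩
      rw [he, hpow e (by omega), ← he, Fin.cast_val_eq_self, add_sub_cancel, boundary_apply]
    · obtain ⟨e, rfl⟩ : ∃ e, l = e + 1 := ⟨l - 1, by omega⟩
      rw [hpow e (by omega)]
      exact hf.add_notMem_range u hl0 hl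
  · obtain ⟨l, b, hb⟩ := exists_pow_apply_mem_of_apply_eq_add_one (Set.range_nonempty f) hψ y
    exact ⟨l, b, hb.symm⟩

end ChordDiagram

/-- Deleting one chord from a chord diagram of order `n + 1` changes the number of boundary
components by exactly one: `F(D') = F(D) + 1` or `F(D') = F(D) - 1`. Consequently
`(n + 1 - 1) + 1 - F(D') ≤ (n + 1) + 1 - F(D)`. -/
theorem deleteChord_boundary_components (n : ℕ) (D : ChordDiagram (n + 1))
    (j : Fin (2 * (n + 1))) (D' : ChordDiagram n) (h : D.DeleteChord j D') :
    (D'.F = D.F + 1 ∨ D'.F + 1 = D.F) ∧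
    (n : ℤ) + 1 - (D'.F : ℤ) ≤ ((n : ℤ) + 1) + 1 - (D.F : ℤ) := by
  have key : D'.F = D.F + 1 ∨ D'.F + 1 = D.F := by
    rcases Nat.eq_zero_or_pos n with rfl | hn
    · right
      rw [D'.F_zero, D.F_eq_numOrbits one_ne_zero, D.boundary_eq_one, numOrbits_one,
        Nat.card_fin]
    · rw [D'.F_eq_numOrbits hn.ne', D.F_eq_numOrbits n.succ_ne_zero, h.numOrbits_boundary hn]
      exact numOrbits_mul_swap (D.fpf j).symm
  exact ⟨key, by omega⟩
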